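/- Let A = (Q, Σ, Δ, Q₀, F) be an NBA with Q₀ ≠ ∅, let (α, t) be a ranked slice over Q, let x ∈ Σ, and let (α̃, t̃) with ñ sets, green ranks G and dominating rank k be the data obtained after the step and prune stages of a transition of the unified construction from (α, t) on x; for 1 ≤ l ≤ ñ let ←̃(l) := max{j | 1 ≤ j < l and α̃(j) < α̃(l)}, with ←̃(l) := 0 if no such j exists. Then: (a) the partition of {1,…,ñ} into singletons I_j = {j} satisfies the merge constraints, so every Muller-Schupp successor of (α, t) on x is a successor permitted by the unified construction; and (b) there is a unique finest partition of {1,…,ñ} into consecutive intervals such that for every interval I and every l ∈ I with α̃(l) ∈ G also ←̃(l)+1 ∈ I, and this partition satisfies the merge constraints (every interval containing an index l with α̃(l) < k is a singleton, and every index l with α̃(l) = k is the maximum of its interval), so the Safra-style successor is also a successor permitted by the unified construction. -/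
import Mathlib


/-! Core definitions: NBA, TDPA, ranked slices, and the unified
determinization construction. -/

universe u v

/-- A nondeterministic Büchi automaton over state type `Q` and alphabet `Alp`. -/
structure NBA (Q : Type u) (Alp : Type v) where
  delta : Q → Alp → Set Q
  Q0 : Set Q
  F : Set Q

namespace NBA

variable {Q : Type u} {Alp : Type v}

/-- `Δ(X, x)`: successors of a set of states. -/
def nextSet (A : NBA Q Alp) (X : Set Q) (x : Alp) : Set Q := ⋃ q ∈ X, A.delta q x

/-- A run of the NBA on the word `w`. -/
def IsRun (A : NBA Q Alp) (w : ℕ → Alp) (q : ℕ → Q) : Prop :=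
  q 0 ∈ A.Q0 ∧ ∀ i, q (i + 1) ∈ A.delta (q i) (w i)

/-- Acceptance: some run visits `F` infinitely often. -/
def Accepts (A : NBA Q Alp) (w : ℕ → Alp) : Prop :=
  ∃ q, A.IsRun w q ∧ ∀ N, ∃ i, N ≤ i ∧ q i ∈ A.F

end NBA

/-- A transition-based deterministic parity automaton. -/
structure TDPA (P : Type u) (Alp : Type v) where
  delta : P → Alp → P
  p0 : P
  c : P → Alp → ℕ

namespace TDPA

variable {P : Type u} {Alp : Type v}

/-- The unique run of the TDPA on `w`. -/
def run (B : TDPA P Alp) (w : ℕ → Alp) : ℕ → P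
  | 0 => B.p0
  | i + 1 => B.delta (B.run w i) (w i)

/-- Acceptance: the minimum priority occurring infinitely often on the run is even. -/
def Accepts (B : TDPA P Alp) (w : ℕ → Alp) : Prop :=
  ∃ m, (∀ N, ∃ i, N ≤ i ∧ B.c (B.run w i) (w i) = m) ∧
    (∀ m', (∀ N, ∃ i, N ≤ i ∧ B.c (B.run w i) (w i) = m') → m ≤ m') ∧ Even m

/-- Reachability from the initial state. -/
def Reachable (B : TDPA P Alp) (p : P) : Prop :=
  ∃ l : List Alp, l.foldl B.delta B.p0 = p

end TDPA

/-- A (ranked) slice: a tuple `S 1, …, S n` of subsets of `Q` together with a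
ranking function `rk`.  Only the values on `{1, …, n}` are relevant. -/
structure Slice (Q : Type u) where
  n : ℕ
  S : ℕ → Set Q
  rk : ℕ → ℕ

namespace Slice

variable {Q : Type u}

/-- A valid ranked slice: the sets are nonempty and pairwise disjoint, the ranking is a
bijection of `{1,…,n}` and the last set has rank `1`. -/
def Valid (s : Slice Q) : Prop :=
  (∀ i ∈ Set.Icc 1 s.n, (s.S i).Nonempty) ∧
  (∀ i ∈ Set.Icc 1 s.n, ∀ j ∈ Set.Icc 1 s.n, i ≠ j → Disjoint (s.S i) (s.S j)) ∧
  Set.BijOn s.rk (Set.Icc 1 s.n) (Set.Icc 1 s.n) ∧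
  (1 ≤ s.n → s.rk s.n = 1)

/-- `Q_t`: union of all sets of the slice. -/
def states (s : Slice Q) : Set Q := ⋃ i ∈ Set.Icc 1 s.n, s.S i

/-- `idx q`: the (unique) index of the set containing `q`. -/
noncomputable def idx (s : Slice Q) (q : Q) : ℕ :=
  sInf {i | 1 ≤ i ∧ i ≤ s.n ∧ q ∈ s.S i}

end Slice

variable {Q : Type u} {Alp : Type v}

/-- `Δ_t(q, x)`: successors of `q` not reachable from a set strictly to the left. -/
noncomputable def dT (A : NBA Q Alp) (s : Slice Q) (q : Q) (x : Alp) : Set Q :=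
  A.delta q x \ A.nextSet (⋃ i ∈ Set.Ico 1 (s.idx q), s.S i) x

/-- `Δ_t(X, x)` for a set `X`. -/
noncomputable def dTs (A : NBA Q Alp) (s : Slice Q) (X : Set Q) (x : Alp) : Set Q :=
  ⋃ q ∈ X, dT A s q x

/-- The sets `Ŝ_j` of the step stage: odd positions are left (accepting) children, even
positions right (non-accepting) children. -/
noncomputable def hatS (A : NBA Q Alp) (s : Slice Q) (x : Alp) (j : ℕ) : Set Q :=
  if j % 2 = 1 then dTs A s (s.S ((j + 1) / 2)) x ∩ A.F
  else dTs A s (s.S (j / 2)) x \ A.F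

/-- The ranking `α̂` of the step stage. -/
def hatRk (s : Slice Q) (j : ℕ) : ℕ :=
  if j % 2 = 1 then s.n + 1 else s.rk (j / 2)

/-- The prune stage: `xs 1 < … < xs nt` enumerates the indices of the nonempty sets
among `Ŝ_1, …, Ŝ_{2n}`, and `xs (nt+1) = 2n + 1`. -/
def IsPrune (A : NBA Q Alp) (s : Slice Q) (x : Alp) (nt : ℕ) (xs : ℕ → ℕ) : Prop :=
  StrictMonoOn xs (Set.Icc 1 nt) ∧
  (∀ i ∈ Set.Icc 1 nt, xs i ∈ Set.Icc 1 (2 * s.n) ∧ (hatS A s x (xs i)).Nonempty) ∧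
  (∀ j ∈ Set.Icc 1 (2 * s.n), (hatS A s x j).Nonempty → ∃ i ∈ Set.Icc 1 nt, xs i = j) ∧
  xs (nt + 1) = 2 * s.n + 1

/-- The ranking `α̃` after prune: `α̃ i = min {α̂ j | xs i ≤ j < xs (i+1)}`. -/
noncomputable def tildeRk (s : Slice Q) (xs : ℕ → ℕ) (i : ℕ) : ℕ :=
  sInf (hatRk s '' {j | xs i ≤ j ∧ j < xs (i + 1)})

/-- The green ranks: ranks in the image of `α̃` that mark an empty set after step. -/
def greenSet (A : NBA Q Alp) (s : Slice Q) (x : Alp) (nt : ℕ) (xs : ℕ → ℕ) : Set ℕ :=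
  {r | (∃ i ∈ Set.Icc 1 nt, tildeRk s xs i = r) ∧
    ∃ j ∈ Set.Icc 1 (2 * s.n), hatS A s x j = ∅ ∧ hatRk s j = r}

/-- The red ranks: ranks in the image of `α̂` but not of `α̃`. -/
def redSet (s : Slice Q) (nt : ℕ) (xs : ℕ → ℕ) : Set ℕ :=
  {r | (∃ j ∈ Set.Icc 1 (2 * s.n), hatRk s j = r) ∧ ¬ ∃ i ∈ Set.Icc 1 nt, tildeRk s xs i = r}

open Classical in
/-- The dominating rank: the minimum of the active ranks `G ∪ R`, or `|Q| + 1` if there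
is no active rank. -/
noncomputable def domRank (G R : Set ℕ) (card : ℕ) : ℕ :=
  if (G ∪ R).Nonempty then sInf (G ∪ R) else card + 1

/-- A partition of `{1,…,nt}` into consecutive intervals, described by its boundaries:
the `j`-th interval is `Icc (b (j-1) + 1) (b j)`. -/
def IsIntervalPartition (nt n' : ℕ) (b : ℕ → ℕ) : Prop :=
  b 0 = 0 ∧ b n' = nt ∧ StrictMonoOn b (Set.Icc 0 n')

/-- The merge constraints: intervals containing a rank `< k` are singletons, and an index
carrying rank `k` is the maximum of its interval. -/
def MergeConstraints (n' : ℕ) (b : ℕ → ℕ) (aT : ℕ → ℕ) (k : ℕ) : Prop :=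
  ∀ j ∈ Set.Icc 1 n', ∀ l ∈ Set.Icc (b (j - 1) + 1) (b j),
    (aT l < k → b j = b (j - 1) + 1) ∧ (aT l = k → l = b j)

/-- A full transition of the (unified) construction, via prune data `(nt, xs)` and the
merge partition `(n', b)`. -/
noncomputable def TransVia [Fintype Q] (A : NBA Q Alp) (s : Slice Q) (x : Alp)
    (s' : Slice Q) (pr : ℕ) (nt : ℕ) (xs : ℕ → ℕ) (n' : ℕ) (b : ℕ → ℕ) : Prop :=
  IsPrune A s x nt xs ∧
  IsIntervalPartition nt n' b ∧
  MergeConstraints n' b (tildeRk s xs)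
    (domRank (greenSet A s x nt xs) (redSet s nt xs) (Fintype.card Q)) ∧
  ((domRank (greenSet A s x nt xs) (redSet s nt xs) (Fintype.card Q) ∈ greenSet A s x nt xs ∧
      pr = 2 * domRank (greenSet A s x nt xs) (redSet s nt xs) (Fintype.card Q)) ∨
   (domRank (greenSet A s x nt xs) (redSet s nt xs) (Fintype.card Q) ∉ greenSet A s x nt xs ∧
      pr = 2 * domRank (greenSet A s x nt xs) (redSet s nt xs) (Fintype.card Q) - 1)) ∧
  s'.n = n' ∧
  (∀ i ∈ Set.Icc 1 n', s'.S i = ⋃ j ∈ Set.Icc (b (i - 1) + 1) (b i), hatS A s x (xs j)) ∧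
  s'.Valid ∧
  (∀ i ∈ Set.Icc 1 n', ∀ j ∈ Set.Icc 1 n',
    sInf (tildeRk s xs '' Set.Icc (b (i - 1) + 1) (b i)) <
      sInf (tildeRk s xs '' Set.Icc (b (j - 1) + 1) (b j)) → s'.rk i < s'.rk j)

/-- A transition of the unified construction (any valid merge partition). -/
noncomputable def UnifiedTrans [Fintype Q] (A : NBA Q Alp) (s : Slice Q) (x : Alp)
    (s' : Slice Q) (pr : ℕ) : Prop :=
  ∃ nt xs n' b, TransVia A s x s' pr nt xs n' b

/-- A transition of the Muller-Schupp construction (merge partition into singletons). -/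
noncomputable def MSTrans [Fintype Q] (A : NBA Q Alp) (s : Slice Q) (x : Alp)
    (s' : Slice Q) (pr : ℕ) : Prop :=
  ∃ nt xs, TransVia A s x s' pr nt xs nt id

/-- `B` is obtained from the unified construction for `A`. -/
noncomputable def ObtainedUnified [Fintype Q] (A : NBA Q Alp) (B : TDPA (Slice Q) Alp) : Prop :=
  B.p0.n = 1 ∧ B.p0.S 1 = A.Q0 ∧ B.p0.rk 1 = 1 ∧
  ∀ p, B.Reachable p → ∀ x, UnifiedTrans A p x (B.delta p x) (B.c p x)

/-- `B` is obtained from the Muller-Schupp construction for `A`. -/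
noncomputable def ObtainedMS [Fintype Q] (A : NBA Q Alp) (B : TDPA (Slice Q) Alp) : Prop :=
  B.p0.n = 1 ∧ B.p0.S 1 = A.Q0 ∧ B.p0.rk 1 = 1 ∧
  ∀ p, B.Reachable p → ∀ x, MSTrans A p x (B.delta p x) (B.c p x)

/-- The left subtree boundary `←̃(l)` w.r.t. a ranking `α`: the largest index `j < l`
(with `j ≥ 1`) whose rank is smaller, and `0` if there is none. -/
noncomputable def lb (α : ℕ → ℕ) (l : ℕ) : ℕ :=
  sSup {j | 1 ≤ j ∧ j < l ∧ α j < α l}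

/-- A partition is closed under green subtrees: each interval containing an index `l`
with green rank also contains the whole subtree `{←̃(l)+1, …, l}` of `l`, i.e. the
index `←̃(l)+1`. -/
def GreenClosed (n' : ℕ) (b : ℕ → ℕ) (aT : ℕ → ℕ) (G : Set ℕ) : Prop :=
  ∀ j ∈ Set.Icc 1 n', ∀ l ∈ Set.Icc (b (j - 1) + 1) (b j),
    aT l ∈ G → lb aT l + 1 ∈ Set.Icc (b (j - 1) + 1) (b j)

/-- `(n1, b1)` refines `(n2, b2)`: every interval of the first partition is contained
in an interval of the second. -/
def Refines (n1 : ℕ) (b1 : ℕ → ℕ) (n2 : ℕ) (b2 : ℕ → ℕ) : Prop :=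
  ∀ j ∈ Set.Icc 1 n1, ∃ j2 ∈ Set.Icc 1 n2,
    Set.Icc (b1 (j - 1) + 1) (b1 j) ⊆ Set.Icc (b2 (j2 - 1) + 1) (b2 j2)

/-! Auxiliary lemmas for the proof. -/

lemma lb_add_one_le (α : ℕ → ℕ) {l : ℕ} (hl : 1 ≤ l) : lb α l + 1 ≤ l := by
  unfold lb
  by_cases h : {j | 1 ≤ j ∧ j < l ∧ α j < α l}.Nonempty
  · have hbdd : BddAbove {j | 1 ≤ j ∧ j < l ∧ α j < α l} := ⟨l, fun y hy => hy.2.1.le⟩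
    have h2 := Nat.sSup_mem h hbdd
    exact h2.2.1
  · rw [Set.not_nonempty_iff_eq_empty.mp h, csSup_empty]
    simpa using hl

lemma le_lb (α : ℕ → ℕ) {l l' : ℕ} (h1 : 1 ≤ l) (h2 : l < l') (h3 : α l < α l') :
    l ≤ lb α l' :=
  le_csSup ⟨l', fun y hy => hy.2.1.le⟩ ⟨h1, h2, h3⟩

/-- Greedy enumeration of a set of naturals: `enumB B j` is the `j`-th element of `B`
(starting from `0`). -/
noncomputable def enumB (B : Set ℕ) : ℕ → ℕ
  | 0 => 0
  | j + 1 => sInf {m | m ∈ B ∧ enumB B j < m}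

lemma enumB_succ_mem {B : Set ℕ} {nt j : ℕ} (hnt : nt ∈ B) (hj : enumB B j < nt) :
    enumB B (j + 1) ∈ B ∧ enumB B j < enumB B (j + 1) :=
  Nat.sInf_mem (s := {m | m ∈ B ∧ enumB B j < m}) ⟨nt, hnt, hj⟩

lemma enumB_succ_le {B : Set ℕ} {j m : ℕ} (hm : m ∈ B) (h : enumB B j < m) :
    enumB B (j + 1) ≤ m := Nat.sInf_le (s := {m | m ∈ B ∧ enumB B j < m}) ⟨hm, h⟩

lemma enumB_reaches {B : Set ℕ} {nt : ℕ} (h0 : 0 ∈ B) (hnt : nt ∈ B)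
    (hle : ∀ m ∈ B, m ≤ nt) : ∃ j, enumB B j = nt := by
  have key : ∀ j, (∃ i, enumB B i = nt) ∨ (enumB B j ∈ B ∧ j ≤ enumB B j) := by
    intro j
    induction j with
    | zero => exact Or.inr ⟨h0, Nat.zero_le _⟩
    | succ j ih =>
      rcases ih with h | ⟨hmem, hge⟩
      · exact Or.inl h
      · by_cases hq : enumB B j = nt
        · exact Or.inl ⟨j, hq⟩
        · have hlt : enumB B j < nt := lt_of_le_of_ne (hle _ hmem) hq
          obtain ⟨h1, h2⟩ := enumB_succ_mem hnt hlt
          exact Or.inr ⟨h1, by omega⟩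
  rcases key (nt + 1) with h | ⟨hmem, hge⟩
  · exact h
  · have := hle _ hmem
    omega

/-- Existence, uniqueness and merge-constraint satisfaction of the finest green-closed
interval partition, abstractly in terms of the ranking `aT`, the green set `G` and the
dominating rank `k`. -/
theorem finest_partition (aT : ℕ → ℕ) (G : Set ℕ) (k : ℕ) (nt : ℕ)
    (hkG : ∀ r ∈ G, k ≤ r)
    (hcore : ∀ l l', 1 ≤ l → l ≤ nt → 1 ≤ l' → l' ≤ nt → l < l' → aT l = aT l' →
      l + 1 < l' ∧ aT (l + 1) < aT l') :
    ∃ n' : ℕ, ∃ b : ℕ → ℕ,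
      (IsIntervalPartition nt n' b ∧
        GreenClosed n' b aT G ∧
        ∀ n2 b2, IsIntervalPartition nt n2 b2 → GreenClosed n2 b2 aT G →
          Refines n' b n2 b2) ∧
      (∀ n2 b2,
        (IsIntervalPartition nt n2 b2 ∧ GreenClosed n2 b2 aT G ∧
          ∀ n3 b3, IsIntervalPartition nt n3 b3 → GreenClosed n3 b3 aT G →
            Refines n2 b2 n3 b3) →
        n2 = n' ∧ ∀ j ≤ n', b2 j = b j) ∧
      MergeConstraints n' b aT k := by
  classical
  set Bad : ℕ → Prop := fun m => ∃ l, 1 ≤ l ∧ l ≤ nt ∧ aT l ∈ G ∧ lb aT l + 1 ≤ m ∧ m < l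
    with hBadDef
  set B : Set ℕ := {m | m ≤ nt ∧ ¬ Bad m} with hBdef
  have h0B : 0 ∈ B := ⟨Nat.zero_le nt, by rintro ⟨l, h1, h2, h3, h4, h5⟩; omega⟩
  have hntB : nt ∈ B := ⟨le_refl nt, by rintro ⟨l, h1, h2, h3, h4, h5⟩; omega⟩
  have hleB : ∀ m ∈ B, m ≤ nt := fun m hm => hm.1
  have hBadOf : ∀ m, m ≤ nt → m ∉ B → Bad m := by
    intro m h1 h2
    by_contra h3
    exact h2 ⟨h1, h3⟩
  set b : ℕ → ℕ := enumB B with hbdef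
  have hreach : ∃ j, b j = nt := enumB_reaches h0B hntB hleB
  set n' : ℕ := sInf {j | b j = nt} with hn'def
  have hbn' : b n' = nt := Nat.sInf_mem (s := {j | b j = nt}) hreach
  have hbefore : ∀ j < n', b j ≠ nt := fun j hj => Nat.notMem_of_lt_sInf (s := {j | b j = nt}) hj
  have hb0 : b 0 = 0 := rfl
  have hmemb : ∀ j ≤ n', b j ∈ B := by
    intro j
    induction j with
    | zero => intro _; exact h0B
    | succ j ih =>
      intro hj
      have h1 := ih (by omega)
      have h2 : b j < nt := lt_of_le_of_ne (hleB _ h1) (hbefore j (by omega))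
      exact (enumB_succ_mem hntB h2).1
  have hstepb : ∀ j < n', b j < b (j + 1) := by
    intro j hj
    have h1 := hmemb j (by omega)
    have h2 : b j < nt := lt_of_le_of_ne (hleB _ h1) (hbefore j hj)
    exact (enumB_succ_mem hntB h2).2
  have hltb : ∀ j ≤ n', ∀ i < j, b i < b j := by
    intro j
    induction j with
    | zero => intro _ i hi; omega
    | succ j ih =>
      intro hj i hi
      have h1 : b j < b (j + 1) := hstepb j (by omega)
      rcases Nat.lt_succ_iff_lt_or_eq.mp hi with h | h
      · exact lt_trans (ih (by omega) i h) h1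
      · rw [h]; exact h1
  have hleb : ∀ j ≤ n', ∀ i ≤ j, b i ≤ b j := by
    intro j hj i hi
    rcases eq_or_lt_of_le hi with h | h
    · rw [h]
    · exact (hltb j hj i h).le
  have hsurjb : ∀ m ∈ B, ∃ i ≤ n', b i = m := by
    intro m hm
    have hP0 : b 0 ≤ m := by rw [hb0]; exact Nat.zero_le m
    have hile : Nat.findGreatest (fun j => b j ≤ m) n' ≤ n' := Nat.findGreatest_le n'
    have hPi : b (Nat.findGreatest (fun j => b j ≤ m) n') ≤ m :=
      Nat.findGreatest_spec (P := fun j => b j ≤ m) (Nat.zero_le n') hP0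
    rcases eq_or_lt_of_le hPi with h | h
    · exact ⟨_, hile, h⟩
    · exfalso
      have hi_lt : Nat.findGreatest (fun j => b j ≤ m) n' < n' := by
        rcases eq_or_lt_of_le hile with h2 | h2
        · rw [h2] at h; rw [hbn'] at h
          have := hleB m hm
          omega
        · exact h2
      have h3 : b (Nat.findGreatest (fun j => b j ≤ m) n' + 1) ≤ m := enumB_succ_le hm h
      exact Nat.findGreatest_is_greatest (P := fun j => b j ≤ m) (Nat.lt_succ_self _) (by omega) h3
  have hgap : ∀ j, 1 ≤ j → j ≤ n' → ∀ m ∈ B, m < b j → m ≤ b (j - 1) := by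
    intro j h1 h2 m hm hlt
    obtain ⟨i, hi, rfl⟩ := hsurjb m hm
    have hij : i < j := by
      by_contra h
      push_neg at h
      have := hleb i hi j h
      omega
    exact hleb (j - 1) (by omega) i (by omega)
  have hnotB : ∀ j, 1 ≤ j → j ≤ n' → ∀ m, b (j - 1) < m → m < b j → m ∉ B := by
    intro j h1 h2 m hm1 hm2 hmB
    have := hgap j h1 h2 m hmB hm2
    omega
  have hpart : IsIntervalPartition nt n' b := by
    refine ⟨hb0, hbn', ?_⟩
    intro i hi j hj hij
    exact hltb j (Set.mem_Icc.mp hj).2 i hij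
  have hgcb : GreenClosed n' b aT G := by
    intro j hj l hl hlG
    rw [Set.mem_Icc] at hj hl ⊢
    have hbjnt : b j ≤ nt := hleB _ (hmemb j hj.2)
    have hl1 : 1 ≤ l := by omega
    have hlnt : l ≤ nt := by omega
    have hub := lb_add_one_le aT hl1
    refine ⟨?_, by omega⟩
    by_contra h
    push_neg at h
    have hbad : Bad (b (j - 1)) := ⟨l, hl1, hlnt, hlG, by omega, by omega⟩
    exact (hmemb (j - 1) (by omega)).2 hbad
  have hbound : ∀ n2 b2, IsIntervalPartition nt n2 b2 → GreenClosed n2 b2 aT G →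
      ∀ i ≤ n2, b2 i ∈ B := by
    intro n2 b2 hp2 hgc i hi
    obtain ⟨hb20, hb2n, hb2sm⟩ := hp2
    have hb2le : ∀ a ≤ n2, ∀ c ≤ a, b2 c ≤ b2 a := by
      intro a ha c hc
      rcases eq_or_lt_of_le hc with h | h
      · rw [h]
      · exact (hb2sm ⟨Nat.zero_le c, by omega⟩ ⟨Nat.zero_le a, ha⟩ h).le
    refine ⟨by rw [← hb2n]; exact hb2le n2 le_rfl i hi, ?_⟩
    rintro ⟨l, hl1, hl2, hl3, hl4, hl5⟩
    have hSne : l ≤ b2 n2 := by omega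
    have hj2mem : l ≤ b2 (sInf {j | l ≤ b2 j}) :=
      Nat.sInf_mem (s := {j | l ≤ b2 j}) ⟨n2, hSne⟩
    have hj2le : sInf {j | l ≤ b2 j} ≤ n2 := Nat.sInf_le (s := {j | l ≤ b2 j}) hSne
    have hj2pos : 1 ≤ sInf {j | l ≤ b2 j} := by
      by_contra h
      have h0 : sInf {j | l ≤ b2 j} = 0 := by omega
      rw [h0, hb20] at hj2mem
      omega
    have hprev0 : sInf {j | l ≤ b2 j} - 1 ∉ {j | l ≤ b2 j} :=
      Nat.notMem_of_lt_sInf (by omega)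
    have hprev : ¬ l ≤ b2 (sInf {j | l ≤ b2 j} - 1) := hprev0
    push_neg at hprev
    have hgcl := hgc _ (Set.mem_Icc.mpr ⟨hj2pos, hj2le⟩) l
      (Set.mem_Icc.mpr ⟨by omega, hj2mem⟩) hl3
    rw [Set.mem_Icc] at hgcl
    have hij : sInf {j | l ≤ b2 j} ≤ i := by
      by_contra h
      push_neg at h
      have h2 : b2 i ≤ b2 (sInf {j | l ≤ b2 j} - 1) := by
        rcases eq_or_lt_of_le (show i ≤ sInf {j | l ≤ b2 j} - 1 by omega) with h3 | h3
        · rw [h3]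
        · exact (hb2sm ⟨Nat.zero_le _, by omega⟩ ⟨Nat.zero_le _, by omega⟩ h3).le
      omega
    have h2 : b2 (sInf {j | l ≤ b2 j}) ≤ b2 i := by
      rcases eq_or_lt_of_le hij with h3 | h3
      · rw [h3]
      · exact (hb2sm ⟨Nat.zero_le _, hj2le⟩ ⟨Nat.zero_le _, hi⟩ h3).le
    omega
  have href : ∀ n2 b2, IsIntervalPartition nt n2 b2 → GreenClosed n2 b2 aT G →
      Refines n' b n2 b2 := by
    intro n2 b2 hp2 hgc2 j hj
    rw [Set.mem_Icc] at hj
    obtain ⟨hb20, hb2n, hb2sm⟩ := hp2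
    have hbj1 : 1 ≤ b j := by
      have := hltb j hj.2 0 (by omega)
      omega
    have hbjnt : b j ≤ nt := hleB _ (hmemb j hj.2)
    have hSne : b j ≤ b2 n2 := by omega
    have hj2mem : b j ≤ b2 (sInf {i | b j ≤ b2 i}) :=
      Nat.sInf_mem (s := {i | b j ≤ b2 i}) ⟨n2, hSne⟩
    have hj2le : sInf {i | b j ≤ b2 i} ≤ n2 := Nat.sInf_le (s := {i | b j ≤ b2 i}) hSne
    have hj2pos : 1 ≤ sInf {i | b j ≤ b2 i} := by
      by_contra h
      have h0 : sInf {i | b j ≤ b2 i} = 0 := by omega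
      rw [h0, hb20] at hj2mem
      omega
    have hprev0 : sInf {i | b j ≤ b2 i} - 1 ∉ {i | b j ≤ b2 i} :=
      Nat.notMem_of_lt_sInf (by omega)
    have hprev : ¬ b j ≤ b2 (sInf {i | b j ≤ b2 i} - 1) := hprev0
    push_neg at hprev
    have hprevB : b2 (sInf {i | b j ≤ b2 i} - 1) ∈ B :=
      hbound n2 b2 ⟨hb20, hb2n, hb2sm⟩ hgc2 _ (by omega)
    have hle1 : b2 (sInf {i | b j ≤ b2 i} - 1) ≤ b (j - 1) :=
      hgap j hj.1 hj.2 _ hprevB hprev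
    exact ⟨_, Set.mem_Icc.mpr ⟨hj2pos, hj2le⟩, Set.Icc_subset_Icc (by omega) hj2mem⟩
  refine ⟨n', b, ⟨hpart, hgcb, href⟩, ?_, ?_⟩
  · -- uniqueness
    rintro n2 b2 ⟨hp2, hgc2, hfin2⟩
    have hb2B : ∀ i ≤ n2, b2 i ∈ B := hbound n2 b2 hp2 hgc2
    obtain ⟨hb20, hb2n, hb2sm⟩ := hp2
    have hb2le : ∀ a ≤ n2, ∀ c ≤ a, b2 c ≤ b2 a := by
      intro a ha c hc
      rcases eq_or_lt_of_le hc with h | h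
      · rw [h]
      · exact (hb2sm ⟨Nat.zero_le c, by omega⟩ ⟨Nat.zero_le a, ha⟩ h).le
    have href2 : Refines n2 b2 n' b := hfin2 n' b hpart hgcb
    have hstep1 : ∀ m ∈ B, ∃ i ≤ n2, b2 i = m := by
      intro m hm
      rcases Nat.eq_zero_or_pos m with h | h
      · exact ⟨0, Nat.zero_le n2, by rw [hb20, h]⟩
      · have hmnt : m ≤ nt := hleB m hm
        have hSne : m ≤ b2 n2 := by omega
        have hj2mem : m ≤ b2 (sInf {i | m ≤ b2 i}) :=
          Nat.sInf_mem (s := {i | m ≤ b2 i}) ⟨n2, hSne⟩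
        have hj2le : sInf {i | m ≤ b2 i} ≤ n2 := Nat.sInf_le (s := {i | m ≤ b2 i}) hSne
        have hj2pos : 1 ≤ sInf {i | m ≤ b2 i} := by
          by_contra h'
          have h0 : sInf {i | m ≤ b2 i} = 0 := by omega
          rw [h0, hb20] at hj2mem
          omega
        have hprev0 : sInf {i | m ≤ b2 i} - 1 ∉ {i | m ≤ b2 i} :=
          Nat.notMem_of_lt_sInf (by omega)
        have hprev : ¬ m ≤ b2 (sInf {i | m ≤ b2 i} - 1) := hprev0
        push_neg at hprev
        obtain ⟨i, hiIcc, hsub⟩ := href2 _ (Set.mem_Icc.mpr ⟨hj2pos, hj2le⟩)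
        rw [Set.mem_Icc] at hiIcc
        have hmIn := hsub (Set.mem_Icc.mpr ⟨by omega, hj2mem⟩)
        rw [Set.mem_Icc] at hmIn
        have hmeq : m = b i := by
          rcases eq_or_lt_of_le hmIn.2 with h' | h'
          · exact h'
          · have := hgap i hiIcc.1 hiIcc.2 m hm h'
            omega
        have hb2jIn := hsub (Set.mem_Icc.mpr
          ⟨by omega, le_refl (b2 (sInf {i | m ≤ b2 i}))⟩)
        rw [Set.mem_Icc] at hb2jIn
        exact ⟨_, hj2le, by omega⟩
    have hstep2 : ∀ j ≤ n', j ≤ n2 ∧ b2 j = b j := by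
      intro j
      induction j with
      | zero => intro _; exact ⟨Nat.zero_le n2, by rw [hb20, hb0]⟩
      | succ j ih =>
        intro hj
        obtain ⟨hjn2, hjeq⟩ := ih (by omega)
        obtain ⟨i, hin2, hieq⟩ := hstep1 (b (j + 1)) (hmemb (j + 1) hj)
        have hgt : b2 j < b2 i := by
          rw [hjeq, hieq]
          exact hstepb j (by omega)
        have hji : j < i := by
          by_contra h'
          push_neg at h'
          have := hb2le j hjn2 i h'
          omega
        have hn2 : j + 1 ≤ n2 := by omega
        have h1 : b2 (j + 1) ≤ b (j + 1) := by
          rw [← hieq]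
          exact hb2le i hin2 (j + 1) hji
        have h2 : b (j + 1) ≤ b2 (j + 1) := by
          have hmem2 : b2 (j + 1) ∈ B := hb2B (j + 1) hn2
          have hgt2 : b j < b2 (j + 1) := by
            rw [← hjeq]
            exact hb2sm ⟨Nat.zero_le j, by omega⟩ ⟨Nat.zero_le _, hn2⟩ (Nat.lt_succ_self j)
          exact enumB_succ_le hmem2 hgt2
        exact ⟨hn2, by omega⟩
    have hn'n2 : n2 = n' := by
      obtain ⟨hle', heq'⟩ := hstep2 n' le_rfl
      by_contra h'
      have hlt' : n' < n2 := lt_of_le_of_ne hle' (fun h => h' h.symm)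
      have h2 : b2 n' < b2 n2 :=
        hb2sm ⟨Nat.zero_le _, hle'⟩ ⟨Nat.zero_le _, le_refl _⟩ hlt'
      rw [heq', hbn', hb2n] at h2
      omega
    exact ⟨hn'n2, fun j hj => (hstep2 j hj).2⟩
  · -- merge constraints
    intro j hj l hl
    rw [Set.mem_Icc] at hj hl
    have hbjnt : b j ≤ nt := hleB _ (hmemb j hj.2)
    have hl1 : 1 ≤ l := by omega
    have hlnt : l ≤ nt := by omega
    have hbmono : b (j - 1) < b j := hltb j hj.2 (j - 1) (by omega)
    constructor
    · intro hltk
      by_contra hne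
      have hstep1 : b (j - 1) + 1 < b j := by omega
      rcases eq_or_lt_of_le hl.2 with hcase | hcase
      · -- l = b j, use m = b j - 1
        have hmnotB : (b j - 1) ∉ B := hnotB j hj.1 hj.2 _ (by omega) (by omega)
        obtain ⟨l', h1, h2, h3, h4, h5⟩ := hBadOf _ (by omega) hmnotB
        have hkle := hkG _ h3
        rcases eq_or_lt_of_le (show l ≤ l' by omega) with he | hlt2
        · rw [← he] at h3
          have := hkG _ h3
          omega
        · have hlb := le_lb aT hl1 hlt2 (by omega)
          omega
      · -- l < b j, use m = l
        have hmnotB : l ∉ B := hnotB j hj.1 hj.2 l (by omega) hcase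
        obtain ⟨l', h1, h2, h3, h4, h5⟩ := hBadOf _ hlnt hmnotB
        have hkle := hkG _ h3
        have hlb := le_lb aT hl1 h5 (by omega)
        omega
    · intro hkeq
      by_contra hne
      have hcase : l < b j := by omega
      have hmnotB : l ∉ B := hnotB j hj.1 hj.2 l (by omega) hcase
      obtain ⟨l', h1, h2, h3, h4, h5⟩ := hBadOf _ hlnt hmnotB
      have hkle := hkG _ h3
      rcases lt_or_ge (aT l) (aT l') with hlt2 | hlt2
      · have hlb := le_lb aT hl1 h5 hlt2
        omega
      · have heq2 : aT l = aT l' := by omega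
        obtain ⟨hlt12, hltaT⟩ := hcore l l' hl1 hlnt h1 h2 h5 heq2
        have hlb := le_lb aT (by omega) hlt12 hltaT
        omega

/-- Key structural lemma about `α̃`: if two indices carry the same rank then both ranks
are `n + 1`, the windows are singleton odd positions, and the index right after the
first one carries a strictly smaller rank. -/
lemma tildeRk_core {Q Alp : Type} (A : NBA Q Alp) (s : Slice Q) (hs : s.Valid) (x : Alp)
    (nt : ℕ) (xs : ℕ → ℕ) (hpr : IsPrune A s x nt xs) :
    ∀ l l', 1 ≤ l → l ≤ nt → 1 ≤ l' → l' ≤ nt → l < l' →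
      tildeRk s xs l = tildeRk s xs l' →
      l + 1 < l' ∧ tildeRk s xs (l + 1) < tildeRk s xs l' := by
  obtain ⟨hmono, hmem, hsurj, hlast⟩ := hpr
  obtain ⟨-, -, hbij, -⟩ := hs
  have hlt : ∀ i, 1 ≤ i → i ≤ nt → xs i < xs (i + 1) := by
    intro i h1 h2
    rcases eq_or_lt_of_le h2 with h | h
    · subst h
      have h3 := (hmem i (Set.mem_Icc.mpr ⟨h1, le_rfl⟩)).1
      rw [Set.mem_Icc] at h3
      rw [hlast]
      omega
    · exact hmono (Set.mem_Icc.mpr ⟨h1, h2⟩) (Set.mem_Icc.mpr ⟨by omega, by omega⟩)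
        (Nat.lt_succ_self i)
  have hwin : ∀ i, 1 ≤ i → i ≤ nt → ∀ j, xs i ≤ j → j < xs (i + 1) →
      1 ≤ j ∧ j ≤ 2 * s.n := by
    intro i h1 h2 j hj1 hj2
    have h3 := (hmem i (Set.mem_Icc.mpr ⟨h1, h2⟩)).1
    rw [Set.mem_Icc] at h3
    have h4 : xs (i + 1) ≤ 2 * s.n + 1 := by
      rcases eq_or_lt_of_le h2 with h | h
      · rw [h, hlast]
      · have h5 := (hmem (i + 1) (Set.mem_Icc.mpr ⟨by omega, by omega⟩)).1
        rw [Set.mem_Icc] at h5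
        omega
    omega
  have hub : ∀ i, 1 ≤ i → i ≤ nt → ∀ j, xs i ≤ j → j < xs (i + 1) →
      tildeRk s xs i ≤ hatRk s j := by
    intro i h1 h2 j hj1 hj2
    unfold tildeRk
    exact Nat.sInf_le ⟨j, ⟨hj1, hj2⟩, rfl⟩
  have hach : ∀ i, 1 ≤ i → i ≤ nt →
      ∃ j, (xs i ≤ j ∧ j < xs (i + 1)) ∧ hatRk s j = tildeRk s xs i := by
    intro i h1 h2
    have hne : (hatRk s '' {j | xs i ≤ j ∧ j < xs (i + 1)}).Nonempty :=
      ⟨hatRk s (xs i), xs i, ⟨le_refl _, hlt i h1 h2⟩, rfl⟩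
    obtain ⟨j, hj, hval⟩ := Nat.sInf_mem hne
    exact ⟨j, hj, hval⟩
  have hodd : ∀ j, j % 2 = 1 → hatRk s j = s.n + 1 := by
    intro j h
    unfold hatRk
    rw [if_pos h]
  have heven : ∀ j, j % 2 = 0 → hatRk s j = s.rk (j / 2) := by
    intro j h
    unfold hatRk
    rw [if_neg (by omega)]
  have hevenle : ∀ j, j % 2 = 0 → 1 ≤ j → j ≤ 2 * s.n → s.rk (j / 2) ≤ s.n := by
    intro j h h1 h2
    have h3 := hbij.mapsTo (Set.mem_Icc.mpr (show 1 ≤ j / 2 ∧ j / 2 ≤ s.n by omega))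
    exact (Set.mem_Icc.mp h3).2
  intro l l' hl1 hl2 hl1' hl2' hll haT
  by_cases hcase : tildeRk s xs l ≤ s.n
  · exfalso
    obtain ⟨j, ⟨hj1, hj2⟩, hjv⟩ := hach l hl1 hl2
    obtain ⟨j', ⟨hj1', hj2'⟩, hjv'⟩ := hach l' hl1' hl2'
    have hje : j % 2 = 0 := by
      by_contra h
      have h' : j % 2 = 1 := by omega
      rw [hodd j h'] at hjv
      omega
    have hje' : j' % 2 = 0 := by
      by_contra h
      have h' : j' % 2 = 1 := by omega
      rw [hodd j' h'] at hjv'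
      omega
    have hxs : xs (l + 1) ≤ xs l' := by
      rcases eq_or_lt_of_le (Nat.succ_le_of_lt hll) with h | h
      · exact le_of_eq (congrArg xs h)
      · exact (hmono (Set.mem_Icc.mpr ⟨by omega, by omega⟩)
          (Set.mem_Icc.mpr ⟨hl1', hl2'⟩) h).le
    have hjj : j < j' := lt_of_lt_of_le hj2 (le_trans hxs hj1')
    have hb := hwin l hl1 hl2 j hj1 hj2
    have hb' := hwin l' hl1' hl2' j' hj1' hj2'
    rw [heven j hje] at hjv
    rw [heven j' hje'] at hjv'
    have hinj := hbij.injOn (Set.mem_Icc.mpr (show 1 ≤ j / 2 ∧ j / 2 ≤ s.n by omega))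
      (Set.mem_Icc.mpr (show 1 ≤ j' / 2 ∧ j' / 2 ≤ s.n by omega))
      (by rw [hjv, hjv', haT])
    omega
  · push_neg at hcase
    have hallodd : ∀ i, 1 ≤ i → i ≤ nt → tildeRk s xs i = tildeRk s xs l →
        xs i % 2 = 1 ∧ xs (i + 1) = xs i + 1 := by
      intro i h1 h2 hieq
      have hx1 : xs i % 2 = 1 := by
        by_contra h
        have h0 : xs i % 2 = 0 := by omega
        have hu := hub i h1 h2 (xs i) le_rfl (hlt i h1 h2)
        rw [heven _ h0] at hu
        have hbd := hwin i h1 h2 (xs i) le_rfl (hlt i h1 h2)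
        have h3 := hevenle _ h0 hbd.1 hbd.2
        omega
      refine ⟨hx1, ?_⟩
      by_contra h
      have hlt2 : xs i + 1 < xs (i + 1) := by
        have := hlt i h1 h2
        omega
      have h0 : (xs i + 1) % 2 = 0 := by omega
      have hu := hub i h1 h2 (xs i + 1) (by omega) hlt2
      rw [heven _ h0] at hu
      have hbd := hwin i h1 h2 (xs i + 1) (by omega) hlt2
      have h3 := hevenle _ h0 hbd.1 hbd.2
      omega
    obtain ⟨ho1, he1⟩ := hallodd l hl1 hl2 rfl
    obtain ⟨ho2, he2⟩ := hallodd l' hl1' hl2' haT.symm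
    have hne : l + 1 ≠ l' := by
      intro h
      rw [← h, he1] at ho2
      omega
    have hl12 : l + 1 < l' := by omega
    have haTl' : tildeRk s xs l' = s.n + 1 := by
      have h1 := hub l' hl1' hl2' (xs l') le_rfl (hlt l' hl1' hl2')
      rw [hodd _ ho2] at h1
      omega
    have h1mem1 : 1 ≤ l + 1 := by omega
    have h1mem2 : l + 1 ≤ nt := by omega
    have h0 : xs (l + 1) % 2 = 0 := by rw [he1]; omega
    have h1 := hub (l + 1) h1mem1 h1mem2 (xs (l + 1)) le_rfl (hlt (l + 1) h1mem1 h1mem2)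
    rw [heven _ h0] at h1
    have hbd := hwin (l + 1) h1mem1 h1mem2 (xs (l + 1)) le_rfl (hlt (l + 1) h1mem1 h1mem2)
    have h3 := hevenle _ h0 hbd.1 hbd.2
    exact ⟨hl12, by omega⟩

/-- Given the data `(α̃, t̃)` (described by the prune data `(nt, xs)`),
green ranks `G` and dominating rank `k` obtained after the step and prune stages of a
transition from `(α, t)` on `x`:
(a) the partition into singletons satisfies the merge constraints, hence every
Muller-Schupp successor is a successor permitted by the unified construction; and
(b) there is a unique finest partition of `{1,…,ñ}` into consecutive intervals closed
under green subtrees, and it satisfies the merge constraints (so the Safra-style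
successor is also permitted by the unified construction). -/
theorem singleton_and_safra_merges_valid {Q Alp : Type} [Fintype Q] (A : NBA Q Alp)
    (hQ0 : A.Q0.Nonempty) (s : Slice Q) (hs : s.Valid) (x : Alp)
    (nt : ℕ) (xs : ℕ → ℕ) (hpr : IsPrune A s x nt xs) :
    (MergeConstraints nt id (tildeRk s xs)
        (domRank (greenSet A s x nt xs) (redSet s nt xs) (Fintype.card Q)) ∧
      ∀ s' pr, MSTrans A s x s' pr → UnifiedTrans A s x s' pr) ∧
    (∃ n' : ℕ, ∃ b : ℕ → ℕ,
      (IsIntervalPartition nt n' b ∧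
        GreenClosed n' b (tildeRk s xs) (greenSet A s x nt xs) ∧
        ∀ n2 b2, IsIntervalPartition nt n2 b2 →
          GreenClosed n2 b2 (tildeRk s xs) (greenSet A s x nt xs) →
            Refines n' b n2 b2) ∧
      (∀ n2 b2,
        (IsIntervalPartition nt n2 b2 ∧
          GreenClosed n2 b2 (tildeRk s xs) (greenSet A s x nt xs) ∧
          ∀ n3 b3, IsIntervalPartition nt n3 b3 →
            GreenClosed n3 b3 (tildeRk s xs) (greenSet A s x nt xs) →
              Refines n2 b2 n3 b3) →
        n2 = n' ∧ ∀ j ≤ n', b2 j = b j) ∧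
      MergeConstraints n' b (tildeRk s xs)
        (domRank (greenSet A s x nt xs) (redSet s nt xs) (Fintype.card Q))) := by
  classical
  have hkG : ∀ r ∈ greenSet A s x nt xs,
      domRank (greenSet A s x nt xs) (redSet s nt xs) (Fintype.card Q) ≤ r := by
    intro r hr
    have hne : (greenSet A s x nt xs ∪ redSet s nt xs).Nonempty := ⟨r, Or.inl hr⟩
    have heq : domRank (greenSet A s x nt xs) (redSet s nt xs) (Fintype.card Q) =
        sInf (greenSet A s x nt xs ∪ redSet s nt xs) := by
      unfold domRank
      exact if_pos hne
    rw [heq]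
    exact Nat.sInf_le (Or.inl hr)
  constructor
  · constructor
    · intro j hj l hl
      simp only [id_eq] at hl ⊢
      rw [Set.mem_Icc] at hj hl
      exact ⟨fun _ => by omega, fun _ => by omega⟩
    · rintro s' pr ⟨nt2, xs2, h⟩
      exact ⟨nt2, xs2, nt2, id, h⟩
  · exact finest_partition (tildeRk s xs) (greenSet A s x nt xs)
      (domRank (greenSet A s x nt xs) (redSet s nt xs) (Fintype.card Q)) nt hkG
      (fun l l' h1 h2 h3 h4 h5 h6 => tildeRk_core A s hs x nt xs hpr l l' h1 h2 h3 h4 h5 h6)
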